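/- arXiv:1212.1650 — 2 statements merged into one kernel-verified Lean document; each statement's English description precedes it below -/
import Mathlib

section
/- The 6-dimensional filiform Lie algebra F_6^4 with nonzero brackets [x_1,x_i] = x_{i+1} for i = 2,3,4,5, [x_2,x_3] = x_5, and [x_2,x_4] = x_6 has index 2. -/
/-!
The elements x₃, …, x₆ span a 4-dimensional abelian subalgebra `a`. For every `f`, the map
`a → 𝔤*`, `v ↦ f ∘ ad v` takes values in the annihilator of `a`, so its kernel `a ∩ 𝔤^f` has
dimension at least `2 · 4 - 6 = 2`. Conversely, for `f = x₆*` the pairs `(x₁, x₅)` and `(x₂, x₄)`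
are hyperbolic pairs of the skew form `f ⁅·, ·⁆`, which therefore has rank at least 4, so
`dim 𝔤^f ≤ 2`.
-/

open Module

noncomputable def lieStab (K : Type*) {L : Type*} [Field K] [LieRing L] [LieAlgebra K L]
    (f : Module.Dual K L) : Submodule K L where
  carrier := {x | ∀ y, f ⁅x, y⁆ = 0}
  add_mem' := by
    intro a b ha hb y
    rw [add_lie, map_add, ha y, hb y, add_zero]
  zero_mem' := by intro y; simp
  smul_mem' := by
    intro t a ha y
    rw [smul_lie, map_smul, ha y, smul_zero]

noncomputable def lieIndex (K L : Type*) [Field K] [LieRing L] [LieAlgebra K L] : ℕ :=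
  ⨅ f : Module.Dual K L, Module.finrank K (lieStab K f)

section

variable (K : Type*) {L : Type*} [Field K] [LieRing L] [LieAlgebra K L]

def lieForm (f : Module.Dual K L) : L →ₗ[K] L →ₗ[K] K :=
  LinearMap.mk₂ K (fun x y => f ⁅x, y⁆) (by simp [add_lie]) (by simp [smul_lie])
    (by simp [lie_add]) (by simp [lie_smul])

@[simp]
theorem lieForm_apply (f : Module.Dual K L) (x y : L) : lieForm K f x y = f ⁅x, y⁆ := rfl

theorem lieStab_eq_ker_lieForm (f : Module.Dual K L) :
    lieStab K f = LinearMap.ker (lieForm K f) := by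
  ext x
  simp [lieStab, LinearMap.ext_iff]

theorem le_lieIndex {n : ℕ} (h : ∀ f : Module.Dual K L, n ≤ finrank K (lieStab K f)) :
    n ≤ lieIndex K L :=
  le_ciInf h

theorem lieIndex_le (f : Module.Dual K L) : lieIndex K L ≤ finrank K (lieStab K f) :=
  ciInf_le (OrderBot.bddBelow _) f

theorem lie_eq_zero_of_mem_span {s : Set L} (hs : ∀ a ∈ s, ∀ b ∈ s, ⁅a, b⁆ = 0) {a b : L}
    (ha : a ∈ Submodule.span K s) (hb : b ∈ Submodule.span K s) : ⁅a, b⁆ = 0 := by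
  have hsb : ∀ c ∈ s, ⁅b, c⁆ = 0 := fun c hc => by
    have : Submodule.span K s ≤ LinearMap.ker (LieAlgebra.ad K L c) :=
      Submodule.span_le.2 fun d hd => hs c hc d hd
    rw [← lie_skew, ← LieAlgebra.ad_apply K, LinearMap.mem_ker.1 (this hb), neg_zero]
  have : Submodule.span K s ≤ LinearMap.ker (LieAlgebra.ad K L b) := Submodule.span_le.2 hsb
  rw [← lie_skew, ← LieAlgebra.ad_apply K, LinearMap.mem_ker.1 (this ha), neg_zero]

variable [FiniteDimensional K L]

theorem two_mul_finrank_le_finrank_add_finrank_lieStab (f : Module.Dual K L) (A : Submodule K L)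
    (hA : ∀ a ∈ A, ∀ b ∈ A, ⁅a, b⁆ = 0) :
    2 * finrank K A ≤ finrank K L + finrank K (lieStab K f) := by
  let ψ := lieForm K f ∘ₗ A.subtype
  have hrange : LinearMap.range ψ ≤ A.dualAnnihilator := by
    rintro _ ⟨a, rfl⟩
    simp only [Submodule.mem_dualAnnihilator]
    intro b hb
    simp [ψ, hA a a.2 b hb]
  let incl : LinearMap.ker ψ →ₗ[K] lieStab K f :=
    (A.subtype ∘ₗ (LinearMap.ker ψ).subtype).codRestrict _ fun a => by
      rw [lieStab_eq_ker_lieForm]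
      exact a.2
  have hker : finrank K (LinearMap.ker ψ) ≤ finrank K (lieStab K f) :=
    LinearMap.finrank_le_finrank_of_injective (f := incl) fun a b h =>
      Subtype.ext (Subtype.ext (congrArg (fun v : lieStab K f => (v : L)) h))
  have : finrank K (LinearMap.range ψ) ≤ finrank K A.dualAnnihilator :=
    Submodule.finrank_mono hrange
  have := ψ.finrank_range_add_finrank_ker
  have : finrank K A + finrank K A.dualAnnihilator = finrank K L :=
    Subspace.finrank_add_finrank_dualAnnihilator_eq A
  omega

theorem finrank_lieStab_add_card_le {ι : Type*} [Fintype ι] [DecidableEq ι]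
    (f : Module.Dual K L) (u y : ι → L)
    (h : ∀ i j, f ⁅u i, y j⁆ = if i = j then 1 else 0) :
    finrank K (lieStab K f) + Fintype.card ι ≤ finrank K L := by
  let Φ : L →ₗ[K] ι → K := LinearMap.pi fun j => (lieForm K f).flip (y j)
  have hsurj : LinearMap.range Φ = ⊤ := by
    refine LinearMap.range_eq_top.2 fun c => ⟨∑ i, c i • u i, funext fun j => ?_⟩
    simp [Φ, h]
  have hker : lieStab K f ≤ LinearMap.ker Φ := fun x hx => by
    simpa [Φ, funext_iff] using fun j => hx (y j)
  have := Submodule.finrank_mono hker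
  have := Φ.finrank_range_add_finrank_ker
  rw [hsurj, finrank_top, Module.finrank_fintype_fun_eq_card] at this
  omega

theorem finrank_lieStab_add_two_mul_card_le {ι : Type*} [Fintype ι] [DecidableEq ι]
    (f : Module.Dual K L) (u y : ι → L)
    (huy : ∀ i j, f ⁅u i, y j⁆ = if i = j then 1 else 0)
    (huu : ∀ i j, f ⁅u i, u j⁆ = 0) (hyy : ∀ i j, f ⁅y i, y j⁆ = 0) :
    finrank K (lieStab K f) + 2 * Fintype.card ι ≤ finrank K L := by
  have := finrank_lieStab_add_card_le K f (Sum.elim u (-y)) (Sum.elim y u) <| by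
    rintro (i | i) (j | j)
    · simp [huy]
    · simp [huu]
    · simp [hyy]
    · rw [Sum.elim_inr, Sum.elim_inr, Pi.neg_apply, neg_lie, ← lie_skew, neg_neg, huy]
      simp [eq_comm]
  rwa [Fintype.card_sum, ← two_mul] at this

theorem finrank_lieStab_add_four_le (f : Module.Dual K L) {u₁ u₂ y₁ y₂ : L}
    (h₁₁ : f ⁅u₁, y₁⁆ = 1) (h₁₂ : f ⁅u₁, y₂⁆ = 0) (h₂₁ : f ⁅u₂, y₁⁆ = 0) (h₂₂ : f ⁅u₂, y₂⁆ = 1)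
    (hu : f ⁅u₁, u₂⁆ = 0) (hy : f ⁅y₁, y₂⁆ = 0) :
    finrank K (lieStab K f) + 4 ≤ finrank K L := by
  have hu' : f ⁅u₂, u₁⁆ = 0 := by rw [← lie_skew, map_neg, hu, neg_zero]
  have hy' : f ⁅y₂, y₁⁆ = 0 := by rw [← lie_skew, map_neg, hy, neg_zero]
  have := finrank_lieStab_add_two_mul_card_le K f ![u₁, u₂] ![y₁, y₂]
    (by simp [Fin.forall_fin_two, h₁₁, h₁₂, h₂₁, h₂₂])
    (by simp [Fin.forall_fin_two, hu, hu'])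
    (by simp [Fin.forall_fin_two, hy, hy'])
  simpa using this

end

theorem stmt12_general (K : Type*) [Field K]
    (L : Type*) [LieRing L] [LieAlgebra K L]
    (x : ℕ → L)
    (hli : LinearIndependent K fun i : Fin 6 => x (i.1 + 1))
    (hsp : Submodule.span K (Set.range fun i : Fin 6 => x (i.1 + 1)) = ⊤)
    (hbr1 : ∀ i, 2 ≤ i → i ≤ 5 → ⁅x 1, x i⁆ = x (i + 1))
    (hbr3 : ⁅x 2, x 4⁆ = x 6)
    (hz : ∀ i j, 1 ≤ i → i ≤ 6 → 1 ≤ j → j ≤ 6 →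
      ¬(i = 1 ∧ 2 ≤ j ∧ j ≤ 5) → ¬(j = 1 ∧ 2 ≤ i ∧ i ≤ 5) → ¬(i = 2 ∧ j = 3) → ¬(i = 3 ∧ j = 2) → ¬(i = 2 ∧ j = 4) → ¬(i = 4 ∧ j = 2) →
      ⁅x i, x j⁆ = 0) :
    lieIndex K L = 2 := by
  let b := Basis.mk hli hsp.ge
  have : FiniteDimensional K L := b.finiteDimensional_of_finite
  have hdim : finrank K L = 6 := by simpa using finrank_eq_card_basis b
  refine le_antisymm ?_ (le_lieIndex K fun f => ?_)
  · set f₀ := b.coord 5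
    have hf₀ : ∀ i : Fin 6, f₀ (x (i + 1)) = if i = 5 then 1 else 0 := fun i => by
      rw [← Basis.mk_apply hli hsp.ge, Basis.coord_apply, Basis.repr_self, Finsupp.single_apply]
    have h25 : ⁅x 2, x 5⁆ = 0 := by apply hz <;> decide
    have h54 : ⁅x 5, x 4⁆ = 0 := by apply hz <;> decide
    have := finrank_lieStab_add_four_le K f₀ (u₁ := x 1) (u₂ := x 2) (y₁ := x 5) (y₂ := x 4)
      (by simpa [hbr1 5] using hf₀ 5) (by simpa [hbr1 4] using hf₀ 4) (by simp [h25])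
      (by simpa [hbr3] using hf₀ 5) (by simpa [hbr1 2] using hf₀ 2) (by simp [h54])
    exact (lieIndex_le K f₀).trans (by omega)
  · have hli' : LinearIndependent K fun i : Fin 4 => x (i + 3) := by
      convert hli.comp _ (Fin.natAdd_injective 4 2) using 2 with i
      simp only [Function.comp_apply, Fin.val_natAdd]
      ring_nf
    have := two_mul_finrank_le_finrank_add_finrank_lieStab K f
      (Submodule.span K (Set.range fun i : Fin 4 => x (i + 3))) fun a ha c hc =>
        lie_eq_zero_of_mem_span K (by rintro _ ⟨i, rfl⟩ _ ⟨j, rfl⟩; apply hz <;> omega) ha hc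
    rw [finrank_span_eq_card hli', Fintype.card_fin] at this
    omega

theorem stmt12 (K : Type*) [Field K] [IsAlgClosed K] [CharZero K]
    (L : Type*) [LieRing L] [LieAlgebra K L]
    (x : ℕ → L)
    (hli : LinearIndependent K fun i : Fin 6 => x (i.1 + 1))
    (hsp : Submodule.span K (Set.range fun i : Fin 6 => x (i.1 + 1)) = ⊤)
    (hbr1 : ∀ i, 2 ≤ i → i ≤ 5 → ⁅x 1, x i⁆ = x (i + 1))
    (hbr2 : ⁅x 2, x 3⁆ = x 5)
    (hbr3 : ⁅x 2, x 4⁆ = x 6)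
    (hz : ∀ i j, 1 ≤ i → i ≤ 6 → 1 ≤ j → j ≤ 6 →
      ¬(i = 1 ∧ 2 ≤ j ∧ j ≤ 5) → ¬(j = 1 ∧ 2 ≤ i ∧ i ≤ 5) → ¬(i = 2 ∧ j = 3) → ¬(i = 3 ∧ j = 2) → ¬(i = 2 ∧ j = 4) → ¬(i = 4 ∧ j = 2) →
      ⁅x i, x j⁆ = 0) :
    lieIndex K L = 2 :=
  stmt12_general K L x hli hsp hbr1 hbr3 hz
end

section
/- The 7-dimensional filiform Lie algebra F_7^7 with nonzero brackets [x_1,x_i] = x_{i+1} for i = 2,...,6 and [x_2,x_3] = x_7 has index 3. -/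
open Module

/-!
For `f ∈ L*`, the stabilizer `lieStab K f` is the kernel of the skew form `B_f(v, w) = f ⁅v, w⁆`.

Lower bound: `span {x₄, …, x₇}` commutes with the hyperplane `span {x₂, …, x₇}`, so `B_f` maps this
4-dimensional space into a line of `L*`; its kernel there, which lies in `lieStab K f`, has
dimension at least 3.

Upper bound: for `f = x₇*` the brackets `⁅x₁, x₆⁆ = ⁅x₂, x₃⁆ = x₇` make `B_f` nondegenerate on
`span {x₁, x₂, x₃, x₆}`, so `lieStab K f` has dimension at most `7 - 4 = 3`.
-/

section

variable {K L : Type*} [Field K] [LieRing L] [LieAlgebra K L]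

def kirillovForm (f : Dual K L) : LinearMap.BilinForm K L :=
  LinearMap.mk₂ K (fun v w => f ⁅v, w⁆)
    (fun _ _ _ => by simp only [add_lie, map_add]) (fun _ _ _ => by simp only [smul_lie, map_smul])
    (fun _ _ _ => by simp only [lie_add, map_add]) (fun _ _ _ => by simp only [lie_smul, map_smul])

@[simp]
theorem kirillovForm_apply (f : Dual K L) (v w : L) : kirillovForm f v w = f ⁅v, w⁆ := rfl

theorem lie_eq_zero_of_mem_span_range {ι κ : Type*} {a : ι → L} {w : κ → L}
    (h : ∀ i j, ⁅a i, w j⁆ = 0) :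
    ∀ u ∈ Submodule.span K (Set.range a), ∀ v ∈ Submodule.span K (Set.range w), ⁅u, v⁆ = 0 := by
  intro u hu v hv
  induction hu, hv using Submodule.span_induction₂ with
  | mem_mem _ _ hu hv => obtain ⟨i, rfl⟩ := hu; obtain ⟨j, rfl⟩ := hv; exact h i j
  | zero_left => exact zero_lie _
  | zero_right => exact lie_zero _
  | add_left _ _ _ _ _ _ h₁ h₂ => rw [add_lie, h₁, h₂, add_zero]
  | add_right _ _ _ _ _ _ h₁ h₂ => rw [lie_add, h₁, h₂, add_zero]
  | smul_left _ _ _ _ _ h₀ => rw [smul_lie, h₀, smul_zero]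
  | smul_right _ _ _ _ _ h₀ => rw [lie_smul, h₀, smul_zero]

variable [FiniteDimensional K L]

theorem finrank_add_finrank_le_finrank_lieStab_add {A W : Submodule K L}
    (hAW : ∀ a ∈ A, ∀ w ∈ W, ⁅a, w⁆ = 0) (f : Dual K L) :
    finrank K A + finrank K W ≤ finrank K (lieStab K f) + finrank K L := by
  let B := (kirillovForm f).domRestrict A
  have hrange : LinearMap.range B ≤ W.dualAnnihilator := by
    rintro _ ⟨a, rfl⟩
    rw [Submodule.mem_dualAnnihilator]
    intro w hw
    simp [B, hAW a a.2 w hw]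
  have hker : (LinearMap.ker B).map A.subtype ≤ lieStab K f := by
    rintro _ ⟨a, ha, rfl⟩ y
    simpa [B] using LinearMap.congr_fun ha y
  have hB := B.finrank_range_add_finrank_ker
  have hW := Subspace.finrank_add_finrank_dualAnnihilator_eq W
  have h₁ : finrank K (LinearMap.range B) ≤ finrank K W.dualAnnihilator :=
    Submodule.finrank_mono hrange
  have h₂ := Submodule.finrank_mono hker
  rw [Submodule.finrank_map_subtype_eq] at h₂
  omega

theorem finrank_lieStab_add_le {m : ℕ} (f : Dual K L) (u w : Fin m → L)
    (h : ∀ i j, f ⁅u i, w j⁆ = if i = j then 1 else 0) :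
    finrank K (lieStab K f) + m ≤ finrank K L := by
  let Ψ : L →ₗ[K] Fin m → K := LinearMap.pi fun j => (kirillovForm f).flip (w j)
  have hsurj : Function.Surjective Ψ := fun c =>
    ⟨∑ i, c i • u i, funext fun j => by simp [Ψ, h]⟩
  have hle : lieStab K f ≤ LinearMap.ker Ψ := fun v hv => funext fun j => hv (w j)
  have hΨ := Ψ.finrank_range_add_finrank_ker
  rw [LinearMap.range_eq_top.2 hsurj, finrank_top, finrank_fin_fun] at hΨ
  have := Submodule.finrank_mono hle
  omega

end

theorem finrank_span_range_shift {K V : Type*} [Field K] [AddCommGroup V] [Module K V]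
    {x : ℕ → V} {n m k : ℕ} (hx : LinearIndependent K fun i : Fin n => x (i.1 + 1))
    (hkm : k + m ≤ n) :
    finrank K (Submodule.span K (Set.range fun i : Fin m => x (i.1 + k + 1))) = m := by
  have hxk : LinearIndependent K fun i : Fin m => x (i.1 + k + 1) :=
    hx.comp (fun i : Fin m => (⟨i.1 + k, by omega⟩ : Fin n)) fun i j h => Fin.ext (by simpa using h)
  rw [finrank_span_eq_card hxk, Fintype.card_fin]

theorem stmt14_general (K : Type*) [Field K]
    (L : Type*) [LieRing L] [LieAlgebra K L]
    (x : ℕ → L)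
    (hli : LinearIndependent K fun i : Fin 7 => x (i.1 + 1))
    (hsp : Submodule.span K (Set.range fun i : Fin 7 => x (i.1 + 1)) = ⊤)
    (hbr1 : ∀ i, 2 ≤ i → i ≤ 6 → ⁅x 1, x i⁆ = x (i + 1))
    (hbr2 : ⁅x 2, x 3⁆ = x 7)
    (hz : ∀ i j, 1 ≤ i → i ≤ 7 → 1 ≤ j → j ≤ 7 →
      ¬(i = 1 ∧ 2 ≤ j ∧ j ≤ 6) → ¬(j = 1 ∧ 2 ≤ i ∧ i ≤ 6) → ¬(i = 2 ∧ j = 3) → ¬(i = 3 ∧ j = 2) →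
      ⁅x i, x j⁆ = 0) :
    lieIndex K L = 3 := by
  let b : Basis (Fin 7) K L := Basis.mk hli hsp.ge
  have : FiniteDimensional K L := .of_basis b
  have hdim : finrank K L = 7 := by simp [finrank_eq_card_basis b]
  have lower (f : Dual K L) : 3 ≤ finrank K (lieStab K f) := by
    have h := finrank_add_finrank_le_finrank_lieStab_add (lie_eq_zero_of_mem_span_range
      (a := fun i : Fin 4 => x (i.1 + 3 + 1)) (w := fun j : Fin 6 => x (j.1 + 1 + 1))
      fun i j => hz _ _ (by omega) (by omega) (by omega) (by omega) (by omega) (by omega)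
        (by omega) (by omega)) f
    rw [finrank_span_range_shift hli (by norm_num), finrank_span_range_shift hli (by norm_num),
      hdim] at h
    omega
  let f₀ := b.coord 6
  have hf₀ (k : Fin 7) : f₀ (x (k + 1)) = if k = 6 then 1 else 0 := by
    rw [← Basis.mk_apply hli hsp.ge k, Basis.coord_apply, Basis.repr_self, Finsupp.single_apply]
  have upper : finrank K (lieStab K f₀) ≤ 3 := by
    have h₃ : f₀ (x 3) = 0 := by simpa using hf₀ 2
    have h₄ : f₀ (x 4) = 0 := by simpa using hf₀ 3
    have h₇ : f₀ (x 7) = 1 := by simpa using hf₀ 6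
    have hpair (i j : Fin 4) :
        f₀ ⁅![x 1, x 2, x 3, x 6] i, ![x 6, x 3, -x 2, -x 1] j⁆ = if i = j then 1 else 0 := by
      fin_cases i <;> fin_cases j <;> simp [hbr1, hbr2, hz, h₃, h₄, h₇]
    have := finrank_lieStab_add_le f₀ _ _ hpair
    omega
  exact le_antisymm (ciInf_le_of_le (OrderBot.bddBelow _) f₀ upper) (le_ciInf lower)

theorem stmt14 (K : Type*) [Field K] [IsAlgClosed K] [CharZero K]
    (L : Type*) [LieRing L] [LieAlgebra K L]
    (x : ℕ → L)
    (hli : LinearIndependent K fun i : Fin 7 => x (i.1 + 1))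
    (hsp : Submodule.span K (Set.range fun i : Fin 7 => x (i.1 + 1)) = ⊤)
    (hbr1 : ∀ i, 2 ≤ i → i ≤ 6 → ⁅x 1, x i⁆ = x (i + 1))
    (hbr2 : ⁅x 2, x 3⁆ = x 7)
    (hz : ∀ i j, 1 ≤ i → i ≤ 7 → 1 ≤ j → j ≤ 7 →
      ¬(i = 1 ∧ 2 ≤ j ∧ j ≤ 6) → ¬(j = 1 ∧ 2 ≤ i ∧ i ≤ 6) → ¬(i = 2 ∧ j = 3) → ¬(i = 3 ∧ j = 2) →
      ⁅x i, x j⁆ = 0) :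
    lieIndex K L = 3 :=
  stmt14_general K L x hli hsp hbr1 hbr2 hz
end
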